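/- arXiv:1710.08755 — 7 statements merged into one kernel-verified Lean document; each statement's English description precedes it below -/
import Mathlib

section
/- Let ◁ be the covering relation of formal Baire space, inductively defined on pairs (a, U) with a ∈ ℕ* (finite sequences of naturals) and U ⊆ ℕ* by: (η) a ∈ U implies a ◁ U; (ζ) a ◁ U implies a⌢⟨k⟩ ◁ U for every k; (ϝ) if a⌢⟨n⟩ ◁ U for all n ∈ ℕ then a ◁ U. Let ◁' be the relation inductively defined by only the η and ϝ clauses. Then for all a and U, a ◁ U if and only if a ◁' ext(U), where ext(U) = { a ∈ ℕ* | ∃ b ∈ U, b ⊑ a } is the upward closure of U under extension of finite sequences. -/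
/-- Initial segment of `α` of length `n`. -/
def seg (α : ℕ → ℕ) (n : ℕ) : List ℕ := List.ofFn (fun i : Fin n => α i)

/-- `a` followed by the constant zero sequence. -/
def zext (a : List ℕ) : ℕ → ℕ := fun i => a.getD i 0

/-- Upward closure under extension. -/
def extU (U : Set (List ℕ)) : Set (List ℕ) := {a | ∃ b ∈ U, b <+: a}

/-- The cover of formal Baire space, generated by η, ζ, ϝ. -/
inductive Cover : List ℕ → Set (List ℕ) → Prop
  | eta {a : List ℕ} {U : Set (List ℕ)} : a ∈ U → Cover a U
  | zeta {a : List ℕ} {U : Set (List ℕ)} (k : ℕ) : Cover a U → Cover (a ++ [k]) U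
  | digamma {a : List ℕ} {U : Set (List ℕ)} : (∀ n, Cover (a ++ [n]) U) → Cover a U

/-- A spread: a decidable tree where every node has a child. -/
def IsSpread (T : Set (List ℕ)) : Prop :=
  (∀ a, a ∈ T ∨ a ∉ T) ∧ (∀ a b : List ℕ, a <+: b → b ∈ T → a ∈ T) ∧
  (∀ a ∈ T, ∃ n, a ++ [n] ∈ T)

/-- A fan: a finitely branching spread. -/
def IsFan (T : Set (List ℕ)) : Prop :=
  IsSpread T ∧ ∀ a ∈ T, ∃ N, ∀ n, a ++ [n] ∈ T → n ≤ N

/-- `α` is a path in the tree `T`. -/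
def IsPath (T : Set (List ℕ)) (α : ℕ → ℕ) : Prop := ∀ n, seg α n ∈ T

/-- A c-bar: a c-set barring every sequence. -/
def IsCBar (P : Set (List ℕ)) : Prop :=
  (∃ δ : List ℕ → ℕ, ∀ a, a ∈ P ↔ ∀ b, δ a = δ (a ++ b)) ∧
  (∀ α : ℕ → ℕ, ∃ n, seg α n ∈ P)

/-- Pointwise continuity for `F : ℕ^ℕ → ℕ`. -/
def PtwiseCts (F : (ℕ → ℕ) → ℕ) : Prop :=
  ∀ α : ℕ → ℕ, ∃ n, ∀ β : ℕ → ℕ, seg β n = seg α n → F β = F α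

/-- An inductive subset of ℕ*. -/
def Inductive (Q : Set (List ℕ)) : Prop := ∀ a, (∀ n, a ++ [n] ∈ Q) → a ∈ Q

/-- Preimage of a subset of ℕ under a relation r ⊆ ℕ* × ℕ. -/
def rInv (r : List ℕ → ℕ → Prop) (D : Set ℕ) : Set (List ℕ) := {a | ∃ n ∈ D, r a n}

/-- Formal topology map from formal Baire space to formal natural numbers. -/
def IsFTopMap (r : List ℕ → ℕ → Prop) : Prop :=
  Cover [] (rInv r Set.univ) ∧
  ∀ n m : ℕ, ∀ a ∈ extU (rInv r {n}) ∩ extU (rInv r {m}),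
    Cover a (rInv r {l | l = n ∧ n = m})

/-- `F` is formally continuous: induced by a formal topology map on points. -/
def FormallyCts (F : (ℕ → ℕ) → ℕ) : Prop :=
  ∃ r : List ℕ → ℕ → Prop, IsFTopMap r ∧
    ∀ α : ℕ → ℕ, {n | ∃ k, r (seg α k) n} = {F α}

/-- The class of Brouwer-operations. -/
inductive IsBrouwerOp : (List ℕ → ℕ) → Prop
  | const (n : ℕ) : IsBrouwerOp (fun _ => n + 1)
  | sup {γ : List ℕ → ℕ} : γ [] = 0 →
      (∀ n, IsBrouwerOp (fun a => γ (n :: a))) → IsBrouwerOp γ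

/-- `bar γ`: minimal sequences on which `γ` is positive. -/
def barOf (γ : List ℕ → ℕ) : Set (List ℕ) :=
  {a | 0 < γ a ∧ ∀ b : List ℕ, b <+: a → b ≠ a → γ b = 0}

/-- The set presentation `Cov` of formal Baire space. -/
inductive Cov : List ℕ → Set (List ℕ) → Prop
  | single (a : List ℕ) : Cov a {a}
  | union {a : List ℕ} {U : ℕ → Set (List ℕ)} :
      (∀ n, Cov (a ++ [n]) (U n)) → Cov a (⋃ n, U n)

/-- The cover generated by η and ϝ only. -/
inductive Cover' : List ℕ → Set (List ℕ) → Prop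
  | eta {a : List ℕ} {U : Set (List ℕ)} : a ∈ U → Cover' a U
  | digamma {a : List ℕ} {U : Set (List ℕ)} : (∀ n, Cover' (a ++ [n]) U) → Cover' a U

/-! ζ is admissible for the η/ϝ-cover of an upward closed set `V`: an η-step at `a` stays an
η-step at `a ++ [k]`, and a ϝ-step at `a` has `a ++ [k]` among its premises. Conversely, every
element of `extU U` is covered by `U` through ζ-steps. -/

lemma mem_extU_of_prefix {U : Set (List ℕ)} {a b : List ℕ} (ha : a ∈ extU U) (hab : a <+: b) :
    b ∈ extU U :=
  let ⟨c, hc, hca⟩ := ha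
  ⟨c, hc, hca.trans hab⟩

lemma Cover'.append_singleton {V : Set (List ℕ)} (hV : ∀ b ∈ V, ∀ k, b ++ [k] ∈ V)
    {a : List ℕ} (h : Cover' a V) (k : ℕ) : Cover' (a ++ [k]) V := by
  cases h with
  | eta ha => exact Cover'.eta (hV _ ha k)
  | digamma h => exact h k

lemma Cover'.of_cover {a : List ℕ} {U : Set (List ℕ)} (h : Cover a U) : Cover' a (extU U) := by
  induction h with
  | eta ha => exact Cover'.eta ⟨_, ha, List.prefix_refl _⟩
  | zeta k _ ih =>
    exact ih.append_singleton (fun b hb k => mem_extU_of_prefix hb (List.prefix_append _ _)) k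
  | digamma _ ih => exact Cover'.digamma ih

lemma Cover.append {a : List ℕ} {U : Set (List ℕ)} (h : Cover a U) (c : List ℕ) :
    Cover (a ++ c) U := by
  induction c using List.reverseRecOn with
  | nil => simpa using h
  | append_singleton c k ih => simpa using ih.zeta k

lemma Cover.of_mem_extU {a : List ℕ} {U : Set (List ℕ)} (ha : a ∈ extU U) : Cover a U := by
  obtain ⟨b, hb, c, rfl⟩ := ha
  exact (Cover.eta hb).append c

lemma Cover.of_cover' {a : List ℕ} {U V : Set (List ℕ)} (h : Cover' a V)
    (hV : ∀ b ∈ V, Cover b U) : Cover a U := by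
  induction h with
  | eta hb => exact hV _ hb
  | digamma _ ih => exact Cover.digamma fun n => ih n hV

theorem zeta_elimination (a : List ℕ) (U : Set (List ℕ)) :
    Cover a U ↔ Cover' a (extU U) :=
  ⟨Cover'.of_cover, fun h => Cover.of_cover' h fun _ => Cover.of_mem_extU⟩
end

section
/- A function F : ℕ^ℕ → ℕ is strongly continuous if and only if for each fan T ⊆ ℕ* there exists N ∈ ℕ such that for all paths α in T and all β ∈ ℕ^ℕ, if α and β agree on their first N values then F(α) = F(β). -/
attribute [local instance] PiNat.metricSpaceNatNat

/-- Strong continuity: uniform continuity near every compact subset. -/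
def StronglyCts (F : (ℕ → ℕ) → ℕ) : Prop :=
  ∀ K : Set (ℕ → ℕ), IsCompact K → ∀ ε : ℝ, 0 < ε → ∃ δ : ℝ, 0 < δ ∧
    ∀ x u : ℕ → ℕ, x ∈ K → dist x u < δ → |(F x : ℝ) - F u| < ε

/-!
Agreeing on the first `N` values means being at distance `≤ 2⁻ᴺ`, and `ℕ`-values closer than `1`
are equal, so strong continuity of `F` on a compact `K` says exactly that one `N` serves every
`α ∈ K`. The paths of a fan form a compact set: they are closed, and each coordinate ranges over a
finite set because the levels of a fan are finite. Conversely a compact `K` consists of paths of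
the tree of its initial segments, which is a fan because every coordinate projection of `K` is a
compact, hence finite, subset of `ℕ`.
-/

lemma seg_eq_map_range (α : ℕ → ℕ) (n : ℕ) : seg α n = (List.range n).map α := by
  apply List.ext_getElem <;> simp [seg]

@[simp] lemma seg_length (α : ℕ → ℕ) (n : ℕ) : (seg α n).length = n := by simp [seg]

lemma seg_succ (α : ℕ → ℕ) (n : ℕ) : seg α (n + 1) = seg α n ++ [α n] := by
  simp [seg_eq_map_range, List.range_succ]

lemma getD_seg (α : ℕ → ℕ) {n i : ℕ} (hi : i < n) : (seg α n).getD i 0 = α i := by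
  simp [seg_eq_map_range, hi]

lemma eq_seg_of_prefix {a : List ℕ} {α : ℕ → ℕ} {n : ℕ} (h : a <+: seg α n) :
    a = seg α a.length := by
  have hlen : a.length ≤ n := by simpa using h.length_le
  calc a = (seg α n).take a.length := List.prefix_iff_eq_take.1 h
    _ = seg α a.length := by
      rw [seg_eq_map_range, seg_eq_map_range, ← List.map_take, List.take_range, min_eq_left hlen]

lemma seg_eq_seg_iff_dist_le {α β : ℕ → ℕ} {N : ℕ} :
    seg α N = seg β N ↔ dist α β ≤ (1 / 2) ^ N := by
  rw [dist_comm, ← PiNat.mem_cylinder_iff_dist_le, PiNat.mem_cylinder_iff]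
  simp [seg, List.ofFn_inj, funext_iff, Fin.forall_iff, eq_comm]

lemma isClosed_setOf_isPath (T : Set (List ℕ)) : IsClosed {α | IsPath T α} := by
  simp only [IsPath, Set.ofPred_forall]
  exact isClosed_iInter fun n =>
    (isClosed_discrete {f : Fin n → ℕ | List.ofFn f ∈ T}).preimage (by fun_prop)

namespace IsFan

variable {T : Set (List ℕ)}

lemma finite_children (hT : IsFan T) {a : List ℕ} (ha : a ∈ T) : {n | a ++ [n] ∈ T}.Finite := by
  obtain ⟨N, hN⟩ := hT.2 a ha
  exact (Set.finite_Iic N).subset hN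

lemma finite_level (hT : IsFan T) (n : ℕ) : {a | a ∈ T ∧ a.length = n}.Finite := by
  induction n with
  | zero => exact (Set.finite_singleton []).subset fun a ha => List.length_eq_zero_iff.1 ha.2
  | succ n ih =>
    refine (ih.biUnion fun b hb => (hT.finite_children hb.1).image (b ++ [·])).subset ?_
    rintro a ⟨haT, hlen⟩
    obtain rfl | ⟨b, k, rfl⟩ := a.eq_nil_or_concat
    · simp at hlen
    rw [List.concat_eq_append] at haT hlen ⊢
    exact Set.mem_biUnion ⟨hT.1.2.1 _ _ (List.prefix_append _ _) haT, by simpa using hlen⟩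
      ⟨k, haT, rfl⟩

lemma isCompact_setOf_isPath (hT : IsFan T) : IsCompact {α | IsPath T α} := by
  refine (isCompact_univ_pi fun i => ((hT.finite_level (i + 1)).image
    (·.getD i 0)).isCompact).of_isClosed_subset (isClosed_setOf_isPath T) ?_
  exact fun α hα i _ => ⟨seg α (i + 1), ⟨hα _, seg_length α _⟩, getD_seg α i.lt_succ_self⟩

end IsFan

def treeOf (K : Set (ℕ → ℕ)) : Set (List ℕ) := {a | ∃ α ∈ K, seg α a.length = a}

lemma isPath_treeOf {K : Set (ℕ → ℕ)} {α : ℕ → ℕ} (hα : α ∈ K) : IsPath (treeOf K) α :=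
  fun n => ⟨α, hα, by rw [seg_length]⟩

lemma isFan_treeOf {K : Set (ℕ → ℕ)} (hK : IsCompact K) : IsFan (treeOf K) := by
  refine ⟨⟨fun a => em _, ?_, ?_⟩, ?_⟩
  · rintro a b hab ⟨α, hα, hb⟩
    rw [← hb] at hab
    exact ⟨α, hα, (eq_seg_of_prefix hab).symm⟩
  · rintro a ⟨α, hα, ha⟩
    exact ⟨α a.length, α, hα, by rw [List.length_append, List.length_singleton, seg_succ, ha]⟩
  · intro a _
    obtain ⟨N, hN⟩ := (hK.image (continuous_apply a.length)).finite_of_discrete.bddAbove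
    refine ⟨N, ?_⟩
    rintro k ⟨α, hα, hk⟩
    rw [List.length_append, List.length_singleton, seg_succ] at hk
    have hαk : α a.length = k := List.singleton_inj.1 (List.append_inj' hk rfl).2
    exact hαk ▸ hN ⟨α, hα, rfl⟩

lemma eq_of_abs_cast_sub_lt_one {m n : ℕ} (h : |(m : ℝ) - n| < 1) : m = n := by
  by_contra hne
  have h1 : 1 ≤ dist m n := Nat.pairwise_one_le_dist hne
  rw [← Nat.dist_cast_real, Real.dist_eq] at h1
  linarith

theorem stronglyCts_iff_fan (F : (ℕ → ℕ) → ℕ) :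
    StronglyCts F ↔
      ∀ T : Set (List ℕ), IsFan T → ∃ N, ∀ α : ℕ → ℕ, IsPath T α →
        ∀ β : ℕ → ℕ, seg α N = seg β N → F α = F β := by
  constructor
  · intro hF T hT
    obtain ⟨δ, hδ, hFδ⟩ := hF _ hT.isCompact_setOf_isPath 1 one_pos
    obtain ⟨N, hN⟩ := exists_pow_lt_of_lt_one hδ (by norm_num : (1 / 2 : ℝ) < 1)
    exact ⟨N, fun α hα β hαβ => eq_of_abs_cast_sub_lt_one
      (hFδ α β hα ((seg_eq_seg_iff_dist_le.1 hαβ).trans_lt hN))⟩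
  · intro hF K hK ε hε
    obtain ⟨N, hN⟩ := hF _ (isFan_treeOf hK)
    refine ⟨(1 / 2) ^ N, by positivity, fun x u hx hxu => ?_⟩
    rw [hN x (isPath_treeOf hx) u (seg_eq_seg_iff_dist_le.2 hxu.le), sub_self, abs_zero]
    exact hε
end

section
/- Given a c-bar P ⊆ ℕ* with witness function δ : ℕ* → ℕ (so that P(a) holds iff δ(a) = δ(a⌢b) for all b), the function F : ℕ^ℕ → ℕ defined by F(α) = max({ n ∈ ℕ | δ(ᾱn) ≠ δ(ᾱ(n+1)) } ∪ {1}) is a well-defined, pointwise continuous function. -/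
/-! Once `seg α m ∈ P`, every extension of `seg α m` has the same `δ`-value, so `δ` is constant
along `α` from position `m` on. Hence all jumps of `δ` along `α` lie below `m`, so there is a
largest one, and they are determined by `seg α m`, which makes `m` a modulus of continuity. -/

lemma seg_eq_seg_iff {α β : ℕ → ℕ} {n : ℕ} : seg β n = seg α n ↔ ∀ i < n, β i = α i := by
  simp [seg, List.ofFn_inj, funext_iff, Fin.forall_iff]

lemma seg_prefix_seg (α : ℕ → ℕ) {m n : ℕ} (h : m ≤ n) : seg α m <+: seg α n := by
  obtain ⟨k, rfl⟩ := Nat.exists_eq_add_of_le h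
  exact ⟨List.ofFn fun i : Fin k => α (m + i), by simp [seg, List.ofFn_add]⟩

section

variable {X : Type*} (δ : List ℕ → X)

def jumps (α : ℕ → ℕ) : Set ℕ := {n | δ (seg α n) ≠ δ (seg α (n + 1))}

variable {δ} {α β : ℕ → ℕ} {m : ℕ}

lemma apply_seg_eq_of_le (hm : ∀ b, δ (seg α m) = δ (seg α m ++ b)) {n : ℕ} (hmn : m ≤ n) :
    δ (seg α n) = δ (seg α m) := by
  obtain ⟨b, hb⟩ := seg_prefix_seg α hmn
  rw [← hb, ← hm b]

lemma jumps_subset_Iio (hm : ∀ b, δ (seg α m) = δ (seg α m ++ b)) : jumps δ α ⊆ Set.Iio m := by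
  intro n hn
  rw [Set.mem_Iio]
  by_contra! hmn
  exact hn ((apply_seg_eq_of_le hm hmn).trans (apply_seg_eq_of_le hm (by omega)).symm)

lemma jumps_eq_of_seg_eq (hm : ∀ b, δ (seg α m) = δ (seg α m ++ b)) (hβ : seg β m = seg α m) :
    jumps δ β = jumps δ α := by
  have hβm : ∀ b, δ (seg β m) = δ (seg β m ++ b) := hβ ▸ hm
  ext n
  by_cases hn : n < m
  · have agree : ∀ k ≤ m, seg β k = seg α k := fun k hk =>
      seg_eq_seg_iff.2 fun i hi => seg_eq_seg_iff.1 hβ i (by omega)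
    simp only [jumps, Set.mem_ofPred_eq, agree n hn.le, agree (n + 1) hn]
  · exact iff_of_false (fun h => hn (jumps_subset_Iio hβm h)) (fun h => hn (jumps_subset_Iio hm h))

end

theorem cbar_function_wellDefined_ptwiseCts
    (P : Set (List ℕ)) (δ : List ℕ → ℕ)
    (hP : ∀ a, a ∈ P ↔ ∀ b, δ a = δ (a ++ b))
    (hbar : ∀ α : ℕ → ℕ, ∃ n, seg α n ∈ P) :
    ∃ F : (ℕ → ℕ) → ℕ,
      (∀ α : ℕ → ℕ,
        IsGreatest ({n | δ (seg α n) ≠ δ (seg α (n + 1))} ∪ {1}) (F α)) ∧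
      PtwiseCts F := by
  refine ⟨fun α => sSup (jumps δ α ∪ {1}), fun α => ?_, fun α => ?_⟩
  · obtain ⟨m, hm⟩ := hbar α
    have hbdd : BddAbove (jumps δ α ∪ {1}) :=
      (bddAbove_Iio.mono (jumps_subset_Iio ((hP _).1 hm))).union bddAbove_singleton
    exact ⟨Nat.sSup_mem (Set.union_nonempty.2 (Or.inr ⟨1, rfl⟩)) hbdd, fun _ hn => le_csSup hbdd hn⟩
  · obtain ⟨m, hm⟩ := hbar α
    exact ⟨m, fun β hβ => by simp only [jumps_eq_of_seg_eq ((hP _).1 hm) hβ]⟩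
end

section
/- The following are equivalent: (1) c-BI: for every c-bar P ⊆ ℕ* and every subset Q ⊆ ℕ* that contains P and is inductive (i.e., if Q(a⌢⟨n⟩) for all n then Q(a)), Q(⟨⟩) holds; (2) for every c-bar P ⊆ ℕ*, the root ⟨⟩ is covered by P in formal Baire space, i.e., ⟨⟩ ◁ P. -/
/-! For (1) ⇒ (2), apply c-BI to `Q = {a | a ◁ P}`, which is inductive by the ϝ-rule. For (2) ⇒ (1),
induct on a derivation of `a ◁ P` to show that every extension of `a` lies in `Q`; quantifying over
extensions is what absorbs the ζ-rule, and the η-case needs `P` to be monotone, which holds for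
every c-set. -/

theorem IsCBar.append_mem {P : Set (List ℕ)} (hP : IsCBar P) {a : List ℕ} (ha : a ∈ P)
    (b : List ℕ) : a ++ b ∈ P := by
  obtain ⟨⟨δ, hδ⟩, -⟩ := hP
  rw [hδ] at ha ⊢
  intro c
  rw [List.append_assoc, ← ha (b ++ c), ← ha b]

theorem inductive_setOf_cover (U : Set (List ℕ)) : Inductive {a | Cover a U} :=
  fun _ => Cover.digamma

theorem Cover.append_mem_of_inductive {U Q : Set (List ℕ)} (hU : ∀ a ∈ U, ∀ b, a ++ b ∈ U)
    (hUQ : U ⊆ Q) (hQ : Inductive Q) {a : List ℕ} (h : Cover a U) (b : List ℕ) : a ++ b ∈ Q := by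
  induction h generalizing b with
  | eta ha => exact hUQ (hU _ ha b)
  | zeta k _ ih => simpa using ih hU hUQ ([k] ++ b)
  | digamma _ ih =>
    cases b with
    | nil => simpa using hQ _ fun n => by simpa using ih n hU hUQ []
    | cons n b => simpa using ih n hU hUQ b

theorem cBI_iff_canonical_proof :
    (∀ P : Set (List ℕ), IsCBar P →
      ∀ Q : Set (List ℕ), P ⊆ Q → Inductive Q → [] ∈ Q)
      ↔ (∀ P : Set (List ℕ), IsCBar P → Cover [] P) := by
  refine ⟨fun hBI P hP => hBI P hP _ (fun _ => Cover.eta) (inductive_setOf_cover P),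
    fun hCover P hP Q hPQ hQ => ?_⟩
  simpa using (hCover P hP).append_mem_of_inductive (fun _ => hP.append_mem) hPQ hQ []
end

section
/- For every pointwise continuous function F : ℕ^ℕ → ℕ, the set P ⊆ ℕ* defined by P(a) ⟺ (∀ b ∈ ℕ*, F(a⌢0^ω) = F(a⌢b⌢0^ω)) is a c-bar: it admits a witness function δ : ℕ* → ℕ with P(a) ⟺ (∀b, δ(a) = δ(a⌢b)), and every α ∈ ℕ^ℕ has an initial segment in P. -/
theorem seg_zext_append (a c : List ℕ) : seg (zext (a ++ c)) a.length = a := by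
  refine List.ext_getElem (by simp [seg]) fun i _ hi => ?_
  simp [seg, zext, List.getElem?_append_left hi, List.getElem?_eq_getElem hi]

theorem seg_zext_seg_append (α : ℕ → ℕ) (n : ℕ) (c : List ℕ) :
    seg (zext (seg α n ++ c)) n = seg α n := by
  simpa [seg] using seg_zext_append (seg α n) c

theorem cbar_from_ptwiseCts (F : (ℕ → ℕ) → ℕ) (hF : PtwiseCts F) :
    IsCBar {a : List ℕ | ∀ b : List ℕ, F (zext a) = F (zext (a ++ b))} := by
  refine ⟨⟨fun a => F (zext a), fun _ => Iff.rfl⟩, fun α => ?_⟩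
  obtain ⟨n, hn⟩ := hF α
  refine ⟨n, fun b => ?_⟩
  have hnil := hn _ (seg_zext_seg_append α n [])
  rw [List.append_nil] at hnil
  rw [hnil, hn _ (seg_zext_seg_append α n b)]
end

section
/- Let Cov be the collection of pairs (a, U) inductively defined by: {a} ∈ Cov(a) for every a ∈ ℕ*; and if U_n ∈ Cov(a⌢⟨n⟩) for all n ∈ ℕ, then ⋃_n U_n ∈ Cov(a). Then (assuming countable choice) for all a ∈ ℕ* and U ⊆ ℕ*: a ◁ U in formal Baire space if and only if there exists V ∈ Cov(a) with V ⊆ ext(U). -/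
/-!
Both directions are inductions. A `Cover`-derivation is turned into a `Cov`-set by sending
η to `{a}` and ϝ to the union of the sets chosen for the children (countable choice); for ζ, a
`Cov`-set of `a` yields one of `a ++ [k]` refining it, namely its `k`-th component, or `{a ++ [k]}`
when it is `{a}`. Conversely a `Cov`-set inside `extU U` is replayed by ϝ, its leaves being
covered by η followed by ζ.
-/

lemma subset_extU (U : Set (List ℕ)) : U ⊆ extU U :=
  fun a ha => ⟨a, ha, List.prefix_refl a⟩

lemma extU_mono {U V : Set (List ℕ)} (h : U ⊆ V) : extU U ⊆ extU V :=
  fun _ ⟨b, hb, hba⟩ => ⟨b, h hb, hba⟩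

lemma extU_extU_subset (U : Set (List ℕ)) : extU (extU U) ⊆ extU U := by
  rintro a ⟨b, ⟨c, hc, hcb⟩, hba⟩
  exact ⟨c, hc, hcb.trans hba⟩

lemma Cover.of_cov {a : List ℕ} {U V : Set (List ℕ)} (hV : Cov a V) (hVU : V ⊆ extU U) :
    Cover a U := by
  induction hV with
  | single a => exact Cover.of_mem_extU (hVU rfl)
  | union _ ih => exact Cover.digamma fun n => ih n ((Set.subset_iUnion _ n).trans hVU)

lemma Cov.exists_snoc {a : List ℕ} {V : Set (List ℕ)} (hV : Cov a V) (k : ℕ) :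
    ∃ W, Cov (a ++ [k]) W ∧ W ⊆ extU V := by
  cases hV with
  | single a =>
    refine ⟨{a ++ [k]}, Cov.single _, ?_⟩
    rintro _ rfl
    exact ⟨a, rfl, List.prefix_append a [k]⟩
  | @union _ W hW => exact ⟨W k, hW k, (Set.subset_iUnion W k).trans (subset_extU _)⟩

lemma Cov.exists_of_cover {a : List ℕ} {U : Set (List ℕ)} (h : Cover a U) :
    ∃ V, Cov a V ∧ V ⊆ extU U := by
  induction h with
  | @eta a _ ha => exact ⟨{a}, Cov.single a, Set.singleton_subset_iff.2 (subset_extU _ ha)⟩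
  | zeta k _ ih =>
    obtain ⟨V, hV, hVU⟩ := ih
    obtain ⟨W, hW, hWV⟩ := hV.exists_snoc k
    exact ⟨W, hW, hWV.trans ((extU_mono hVU).trans (extU_extU_subset _))⟩
  | digamma _ ih =>
    choose V hV hVU using ih
    exact ⟨⋃ n, V n, Cov.union hV, Set.iUnion_subset hVU⟩

theorem cov_presents_formal_baire (a : List ℕ) (U : Set (List ℕ)) :
    Cover a U ↔ ∃ V : Set (List ℕ), Cov a V ∧ V ⊆ extU U :=
  ⟨Cov.exists_of_cover, fun ⟨_, hV, hVU⟩ => Cover.of_cov hV hVU⟩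
end

section
/- Assuming countable choice: for any a ∈ ℕ* and U ⊆ ℕ*, U ∈ Cov(a) if and only if there exists a Brouwer-operation γ ∈ K with a ⌢ bar(γ) = U, where a ⌢ bar(γ) = { a⌢b | b ∈ bar(γ) }. In particular, U ∈ Cov(⟨⟩) if and only if U = bar(γ) for some γ ∈ K. -/
/-!
Both directions are inductions that match the two constructors of `Cov` with those of
`IsBrouwerOp`: `{a}` is `a ⌢ bar` of a constant operation, and a union `⋃ n, Uₙ` over the
successors `a ⌢ ⟨n⟩` is `a ⌢ bar` of the operation that is `0` at `⟨⟩` and behaves like the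
operation chosen for `Uₙ` (countable choice) after the first entry `n`.
-/

def brouwerSup (γ : ℕ → List ℕ → ℕ) : List ℕ → ℕ
  | [] => 0
  | n :: b => γ n b

theorem IsBrouwerOp.brouwerSup {γ : ℕ → List ℕ → ℕ} (h : ∀ n, IsBrouwerOp (γ n)) :
    IsBrouwerOp (brouwerSup γ) :=
  IsBrouwerOp.sup rfl h

theorem barOf_const (n : ℕ) : barOf (fun _ => n + 1) = {[]} := by
  ext a
  simp only [barOf, Set.mem_ofPred_eq, Set.mem_singleton_iff]
  constructor
  · rintro ⟨-, hmin⟩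
    by_contra hne
    exact n.succ_ne_zero (hmin [] a.nil_prefix (Ne.symm hne))
  · rintro rfl
    exact ⟨n.succ_pos, fun b hb hne => absurd (List.prefix_nil.mp hb) hne⟩

theorem barOf_eq_iUnion_image_cons {γ : List ℕ → ℕ} (h0 : γ [] = 0) :
    barOf γ = ⋃ n, List.cons n '' barOf (fun a => γ (n :: a)) := by
  ext a
  simp only [Set.mem_iUnion, Set.mem_image, barOf, Set.mem_ofPred_eq]
  constructor
  · rintro ⟨hpos, hmin⟩
    cases a with
    | nil => omega
    | cons n b =>
      refine ⟨n, b, ⟨hpos, fun c hc hne => ?_⟩, rfl⟩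
      exact hmin (n :: c) (List.cons_prefix_cons.mpr ⟨rfl, hc⟩) (by simpa using hne)
  · rintro ⟨n, b, ⟨hpos, hmin⟩, rfl⟩
    refine ⟨hpos, fun c hc hne => ?_⟩
    cases c with
    | nil => exact h0
    | cons m c =>
      obtain ⟨rfl, hc'⟩ := List.cons_prefix_cons.mp hc
      exact hmin c hc' (by simpa using hne)

theorem barOf_brouwerSup (γ : ℕ → List ℕ → ℕ) :
    barOf (brouwerSup γ) = ⋃ n, List.cons n '' barOf (γ n) :=
  barOf_eq_iUnion_image_cons rfl

theorem image_append_iUnion_image_cons (a : List ℕ) (V : ℕ → Set (List ℕ)) :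
    (a ++ ·) '' ⋃ n, List.cons n '' V n = ⋃ n, (a ++ [n] ++ ·) '' V n := by
  simp only [Set.image_iUnion, Set.image_image, List.append_assoc, List.singleton_append]

theorem image_append_barOf_const (a : List ℕ) (n : ℕ) :
    (a ++ ·) '' barOf (fun _ => n + 1) = {a} := by
  rw [barOf_const, Set.image_singleton, List.append_nil]

theorem IsBrouwerOp.cov {γ : List ℕ → ℕ} (h : IsBrouwerOp γ) (a : List ℕ) :
    Cov a ((a ++ ·) '' barOf γ) := by
  induction h generalizing a with
  | const n =>
    rw [image_append_barOf_const]
    exact Cov.single a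
  | sup h0 _ ih =>
    rw [barOf_eq_iUnion_image_cons h0, image_append_iUnion_image_cons]
    exact Cov.union fun n => ih n (a ++ [n])

theorem Cov.exists_isBrouwerOp {a : List ℕ} {U : Set (List ℕ)} (h : Cov a U) :
    ∃ γ, IsBrouwerOp γ ∧ (a ++ ·) '' barOf γ = U := by
  induction h with
  | single a => exact ⟨fun _ => 1, IsBrouwerOp.const 0, image_append_barOf_const a 0⟩
  | @union a V _ ih =>
    choose γ hγ hbar using ih
    refine ⟨brouwerSup γ, IsBrouwerOp.brouwerSup hγ, ?_⟩
    rw [barOf_brouwerSup, image_append_iUnion_image_cons]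
    exact Set.iUnion_congr hbar

theorem cov_iff_brouwerOp_bar :
    (∀ (a : List ℕ) (U : Set (List ℕ)),
      Cov a U ↔ ∃ γ : List ℕ → ℕ, IsBrouwerOp γ ∧ (fun b => a ++ b) '' barOf γ = U) ∧
    (∀ U : Set (List ℕ),
      Cov [] U ↔ ∃ γ : List ℕ → ℕ, IsBrouwerOp γ ∧ barOf γ = U) := by
  have cov_iff (a : List ℕ) (U : Set (List ℕ)) :
      Cov a U ↔ ∃ γ : List ℕ → ℕ, IsBrouwerOp γ ∧ (fun b => a ++ b) '' barOf γ = U :=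
    ⟨Cov.exists_isBrouwerOp, fun ⟨_, hγ, hU⟩ => hU ▸ hγ.cov a⟩
  refine ⟨cov_iff, fun U => ?_⟩
  simp only [cov_iff, List.nil_append, Set.image_id']
end
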